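/- Let y₁,…,yₙ be pairwise distinct points in ℝᵈ, let Wᵢ(h) = {x ∈ ℝᵈ : ⟨x, yᵢ⟩ + hᵢ ≥ ⟨x, yⱼ⟩ + hⱼ for all j}, and let μ be a finite Borel measure on ℝᵈ absolutely continuous with respect to Lebesgue measure. Then for each i, the μ-volume function h ↦ wᵢ(h) := μ(Wᵢ(h)) is continuous on ℝⁿ. -/

import Mathlib

/-!
Membership of a fixed point `x` in the cell `Wᵢ(h)` is decided by finitely many strict
comparisons between the affine functions `h ↦ ⟪x, y j⟫ + h j`, hence is locally constant in `h`
unless two of them tie at `x`. Since the `y j` are distinct, a tie puts `x` on one of finitely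
many hyperplanes, a Lebesgue-null and therefore `μ`-null set. Dominated convergence with the
finite measure `μ` turns this a.e. local constancy into continuity of `h ↦ μ (Wᵢ(h))`.
-/

open RealInnerProductSpace MeasureTheory Filter Topology

theorem MeasureTheory.Measure.addHaar_preimage_singleton_of_ne_zero {E : Type*}
    [NormedAddCommGroup E] [NormedSpace ℝ E] [MeasurableSpace E] [BorelSpace E]
    [FiniteDimensional ℝ E] (μ : Measure E) [μ.IsAddHaarMeasure] {L : E →ₗ[ℝ] ℝ} (hL : L ≠ 0)
    (c : ℝ) : μ (L ⁻¹' {c}) = 0 := by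
  have hfiber : (L ⁻¹' {c} : Set E) = (affineSpan ℝ {c}).comap L.toAffineMap := by
    rw [AffineSubspace.coe_comap, AffineSubspace.coe_affineSpan_singleton]; rfl
  rw [hfiber]
  refine Measure.addHaar_affineSubspace μ _ fun htop => hL ?_
  have hconst : ∀ x, L x = c := fun x => by
    have hx : x ∈ ((affineSpan ℝ {c}).comap L.toAffineMap : Set E) := by
      rw [htop, AffineSubspace.top_coe]; exact Set.mem_univ x
    rwa [← hfiber] at hx
  ext x
  simpa [← hconst 0] using hconst x

theorem ae_inner_add_ne {E : Type*} [NormedAddCommGroup E] [InnerProductSpace ℝ E]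
    [FiniteDimensional ℝ E] [MeasurableSpace E] [BorelSpace E] (μ : Measure E)
    [μ.IsAddHaarMeasure] {v w : E} (hvw : v ≠ w) (a b : ℝ) :
    ∀ᵐ x ∂μ, ⟪x, v⟫ + a ≠ ⟪x, w⟫ + b := by
  have hL : innerₛₗ ℝ (v - w) ≠ 0 := fun h =>
    hvw (sub_eq_zero.mp (inner_self_eq_zero.mp (LinearMap.congr_fun h (v - w))))
  refine measure_mono_null (fun x hx => ?_)
    (Measure.addHaar_preimage_singleton_of_ne_zero μ hL (b - a))
  simp only [Set.mem_compl_iff, Set.mem_ofPred_eq, not_not] at hx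
  simp only [Set.mem_preimage, innerₛₗ_apply_apply, Set.mem_singleton_iff, inner_sub_left]
  rw [real_inner_comm v x, real_inner_comm w x] at hx
  linarith

theorem eventually_le_iff_of_ne {X α : Type*} [TopologicalSpace X] [LinearOrder α]
    [TopologicalSpace α] [OrderClosedTopology α] {f g : X → α} {a : X}
    (hf : ContinuousAt f a) (hg : ContinuousAt g a) (hne : f a ≠ g a) :
    ∀ᶠ b in 𝓝 a, (f b ≤ g b ↔ f a ≤ g a) := by
  rcases hne.lt_or_gt with hlt | hgt
  · filter_upwards [hf.eventually_lt hg hlt] with b hb using iff_of_true hb.le hlt.le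
  · filter_upwards [hg.eventually_lt hf hgt] with b hb using iff_of_false hb.not_ge hgt.not_ge

section LaguerreCell

variable {E ι : Type*} [NormedAddCommGroup E] [InnerProductSpace ℝ E]

def laguerreCell (y : ι → E) (h : ι → ℝ) (i : ι) : Set E :=
  {x | ∀ j, ⟪x, y j⟫ + h j ≤ ⟪x, y i⟫ + h i}

theorem isClosed_laguerreCell (y : ι → E) (h : ι → ℝ) (i : ι) :
    IsClosed (laguerreCell y h i) := by
  simp only [laguerreCell, Set.ofPred_forall]
  exact isClosed_iInter fun j => isClosed_le (by fun_prop) (by fun_prop)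

theorem eventually_mem_laguerreCell_iff [Finite ι] {y : ι → E} {h₀ : ι → ℝ} {i : ι} {x : E}
    (hx : ∀ j ≠ i, ⟪x, y j⟫ + h₀ j ≠ ⟪x, y i⟫ + h₀ i) :
    ∀ᶠ h in 𝓝 h₀, (x ∈ laguerreCell y h i ↔ x ∈ laguerreCell y h₀ i) := by
  have hcoord : ∀ j, ∀ᶠ h in 𝓝 h₀,
      (⟪x, y j⟫ + h j ≤ ⟪x, y i⟫ + h i ↔ ⟪x, y j⟫ + h₀ j ≤ ⟪x, y i⟫ + h₀ i) := by
    intro j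
    rcases eq_or_ne j i with rfl | hji
    · exact Eventually.of_forall fun h => iff_of_true le_rfl le_rfl
    · exact eventually_le_iff_of_ne (continuous_const.add (continuous_apply j)).continuousAt
        (continuous_const.add (continuous_apply i)).continuousAt (hx j hji)
  filter_upwards [eventually_all.mpr hcoord] with h hh using forall_congr' hh

theorem continuous_measure_laguerreCell [Finite ι] [FiniteDimensional ℝ E] [MeasurableSpace E]
    [BorelSpace E] {y : ι → E} (hy : Function.Injective y) (μ : Measure E) [IsFiniteMeasure μ]
    (ν : Measure E) [ν.IsAddHaarMeasure] (hac : μ ≪ ν) (i : ι) :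
    Continuous fun h => μ (laguerreCell y h i) := by
  refine continuous_iff_continuousAt.mpr fun h₀ =>
    tendsto_measure_of_ae_tendsto_indicator_of_isFiniteMeasure _
      (isClosed_laguerreCell y h₀ i).measurableSet
      (fun h => (isClosed_laguerreCell y h i).measurableSet) ?_
  have hgeneric : ∀ᵐ x ∂μ, ∀ j ≠ i, ⟪x, y j⟫ + h₀ j ≠ ⟪x, y i⟫ + h₀ i := by
    refine hac.ae_le (ae_all_iff.mpr fun j => ?_)
    rcases eq_or_ne j i with rfl | hji
    · exact ae_of_all _ fun _ hjj => absurd rfl hjj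
    · filter_upwards [ae_inner_add_ne ν (hy.ne hji) (h₀ j) (h₀ i)] with x hx using fun _ => hx
  filter_upwards [hgeneric] with x hx using eventually_mem_laguerreCell_iff hx

end LaguerreCell

/-- for pairwise distinct `y₁,…,yₙ` and a finite measure `μ` absolutely
continuous w.r.t. Lebesgue measure, the μ-volume of the `i`-th cell
`h ↦ wᵢ(h) = μ(Wᵢ(h))` is a continuous function of the height vector `h ∈ ℝⁿ`. -/
theorem cell_measure_continuous {d n : ℕ}
    (y : Fin n → EuclideanSpace ℝ (Fin d)) (hy : Function.Injective y)
    (μ : Measure (EuclideanSpace ℝ (Fin d))) [IsFiniteMeasure μ]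
    (hac : μ ≪ volume) (i : Fin n) :
    Continuous fun h : EuclideanSpace ℝ (Fin n) =>
      μ {x : EuclideanSpace ℝ (Fin d) | ∀ j, ⟪x, y j⟫ + h j ≤ ⟪x, y i⟫ + h i} :=
  (continuous_measure_laguerreCell hy μ volume hac i).comp (PiLp.continuous_ofLp 2 _)
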